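/- (Layer-wise ℓ1-difference recursion for the CPU iterates, established in the proof of Theorem 1.) For k ≥ 1 define M_{k,n} = Σ_{m∈C_n} |p_n^{k}(m) − p_n^{k−1}(m)| for 0 ≤ n ≤ N (so M_{k,0} = M_{k,N} = 0 for all k ≥ 2, since p_0^{k} ≡ 1 and p_N^{k} ≡ 1). Then for all k ≥ 2 and all 1 ≤ n ≤ N−1: M_{k+1,n} ≤ (μ̄_n·M_{k+1,n−1} + γ_{n+1}·λ·M_{k,n+1})/(λ + μ̲_n). -/
import Mathlib


open Finset Filter

/-- Number of busy units in state `B`. -/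
def wt {N : ℕ} (B : Fin N → Bool) : ℕ := (Finset.univ.filter fun i => B i = true).card

/-- The layer `C_n`: states with exactly `n` busy units. -/
def layer (N n : ℕ) : Finset (Fin N → Bool) := Finset.univ.filter fun B => wt B = n

/-- The full state: all units busy. -/
def fullState (N : ℕ) : Fin N → Bool := fun _ => true

/-- Unit `i` is the most preferred free unit at node `j` in state `l`
(ranks are given by the permutation `ζ j`). -/
def dispatched {N J : ℕ} (ζ : Fin J → (Fin N ≃ Fin N)) (l : Fin N → Bool) (j : Fin J)
    (i : Fin N) : Prop :=
  l i = false ∧ ∀ h : Fin N, (h : ℕ) < ((ζ j).symm i : ℕ) → l ((ζ j) h) = true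

instance {N J : ℕ} (ζ : Fin J → (Fin N ≃ Fin N)) (l : Fin N → Bool) (j : Fin J) (i : Fin N) :
    Decidable (dispatched ζ l j i) := by
  unfold dispatched; infer_instance

/-- Upward transition rate `λ_{lm}`: nonzero only if `m` arises from `l` by flipping
one coordinate `i` from free to busy, in which case it is `λ` times the total demand
fraction of the nodes dispatching unit `i` in state `l`. -/
noncomputable def upRate {N J : ℕ} (lam : ℝ) (f : Fin J → ℝ) (ζ : Fin J → (Fin N ≃ Fin N))
    (l m : Fin N → Bool) : ℝ :=
  ∑ i : Fin N,
    if l i = false ∧ m = Function.update l i true then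
      lam * ∑ j : Fin J, if dispatched ζ l j i then f j else 0
    else 0

/-- Downward transition rate `μ_{lm}`: nonzero only if `m` arises from `l` by flipping
one coordinate `i` from busy to free, in which case it is `ν i`. -/
noncomputable def downRate {N : ℕ} (ν : Fin N → ℝ) (l m : Fin N → Bool) : ℝ :=
  ∑ i : Fin N, if l i = true ∧ m = Function.update l i false then ν i else 0

/-- Total upward rate `λ_m = Σ_l λ_{ml}` out of state `m`. -/
noncomputable def totalUp {N J : ℕ} (lam : ℝ) (f : Fin J → ℝ) (ζ : Fin J → (Fin N ≃ Fin N))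
    (m : Fin N → Bool) : ℝ :=
  ∑ l : Fin N → Bool, upRate lam f ζ m l

/-- Total service completion rate `μ_m = Σ_{i busy} ν i` out of state `m`. -/
noncomputable def totalDown {N : ℕ} (ν : Fin N → ℝ) (m : Fin N → Bool) : ℝ :=
  ∑ i : Fin N, if m i = true then ν i else 0

/-- `C^m_n`: the states of layer `n` at Hamming distance 1 from `m`. -/
def adjLayer {N : ℕ} (n : ℕ) (m : Fin N → Bool) : Finset (Fin N → Bool) :=
  (layer N n).filter fun l => (Finset.univ.filter fun i => l i ≠ m i).card = 1

/-- `λ^k(n) = Σ_{m ∈ C_n} p_n^k(m) · λ_m`. -/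
noncomputable def lamI {N J : ℕ} (lam : ℝ) (f : Fin J → ℝ) (ζ : Fin J → (Fin N ≃ Fin N))
    (pI : ℕ → ℕ → (Fin N → Bool) → ℝ) (k n : ℕ) : ℝ :=
  ∑ m ∈ layer N n, pI k n m * totalUp lam f ζ m

/-- `μ^k(n) = Σ_{m ∈ C_n} p_n^k(m) · μ_m`. -/
noncomputable def muI {N : ℕ} (ν : Fin N → ℝ) (pI : ℕ → ℕ → (Fin N → Bool) → ℝ) (k n : ℕ) : ℝ :=
  ∑ m ∈ layer N n, pI k n m * totalDown ν m

/-- `μ^{k,r}(n) = Σ_{m ∈ C_n} p_n^{k,r}(m) · μ_m`. -/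
noncomputable def muR {N : ℕ} (ν : Fin N → ℝ) (pR : ℕ → ℕ → ℕ → (Fin N → Bool) → ℝ)
    (k n r : ℕ) : ℝ :=
  ∑ m ∈ layer N n, pR k n r m * totalDown ν m

/-- The iterates of the CPU (Conditional Probability Update) algorithm:
`pI k n m` is the converged outer iterate `p_n^k(m)` and `pR k n r m` is the inner
iterate `p_n^{k,r}(m)`.  The converged value `p_n^k` is by definition the limit of
the inner iterates as `r → ∞`. -/
def IsCPUIterates {N J : ℕ} (lam : ℝ) (f : Fin J → ℝ) (ζ : Fin J → (Fin N ≃ Fin N))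
    (ν : Fin N → ℝ) (pI : ℕ → ℕ → (Fin N → Bool) → ℝ)
    (pR : ℕ → ℕ → ℕ → (Fin N → Bool) → ℝ) : Prop :=
  (∀ n ≤ N, ∀ m ∈ layer N n, pI 0 n m = 0) ∧
  (∀ n ≤ N, ∀ m ∈ layer N n, pI 1 n m = 1 / (N.choose n : ℝ)) ∧
  (∀ n ≤ N, ∀ r, 1 ≤ r → ∀ m ∈ layer N n, pR 1 n r m = 1 / (N.choose n : ℝ)) ∧
  (∀ k, 1 ≤ k → ∀ m ∈ layer N 0, pI k 0 m = 1) ∧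
  (∀ k, 1 ≤ k → ∀ m ∈ layer N N, pI k N m = 1) ∧
  (∀ k, 2 ≤ k → ∀ r, ∀ m ∈ layer N 0, pR k 0 r m = 1) ∧
  (∀ k, 2 ≤ k → ∀ r, ∀ m ∈ layer N N, pR k N r m = 1) ∧
  (∀ k, 2 ≤ k → ∀ n, 1 ≤ n → n ≤ N - 1 → ∀ m ∈ layer N n, pR k n 0 m = pI (k - 1) n m) ∧
  (∀ k, 2 ≤ k → ∀ n, 1 ≤ n → n ≤ N - 1 → ∀ r, 1 ≤ r → ∀ m ∈ layer N n,
    pR k n r m =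
      (∑ l ∈ layer N (n - 1),
        pI k (n - 1) l * (muR ν pR k n (r - 1) / lamI lam f ζ pI k (n - 1)) *
          (upRate lam f ζ l m / (totalUp lam f ζ m + totalDown ν m))) +
      (∑ l ∈ adjLayer (n + 1) m,
        pI (k - 1) (n + 1) l * (lamI lam f ζ pI (k - 1) n / muI ν pI (k - 1) (n + 1)) *
          (downRate ν l m / (totalUp lam f ζ m + totalDown ν m)))) ∧
  (∀ k, 2 ≤ k → ∀ n, 1 ≤ n → n ≤ N - 1 → ∀ m ∈ layer N n,
    Filter.Tendsto (fun r => pR k n r m) Filter.atTop (nhds (pI k n m)))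

/-- `μ̄_n`: the maximum of `μ_m` over layer `n`. -/
noncomputable def muBar {N : ℕ} (ν : Fin N → ℝ) (n : ℕ) : ℝ :=
  sSup (totalDown ν '' (layer N n : Set (Fin N → Bool)))

/-- `μ̲_n`: the minimum of `μ_m` over layer `n`. -/
noncomputable def muLow {N : ℕ} (ν : Fin N → ℝ) (n : ℕ) : ℝ :=
  sInf (totalDown ν '' (layer N n : Set (Fin N → Bool)))

/-- `γ_n = μ̄_n / μ̲_n`. -/
noncomputable def gammaL {N : ℕ} (ν : Fin N → ℝ) (n : ℕ) : ℝ := muBar ν n / muLow ν n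

/-- The contraction factors `Φ_n` of Assumption (Φ); for `n = 1` the sum below is empty,
recovering `Φ_1 = (λ/(λ+μ̲_1))·γ_2`. -/
noncomputable def PhiL {N : ℕ} (lam : ℝ) (ν : Fin N → ℝ) (n : ℕ) : ℝ :=
  (lam / (lam + muLow ν n)) *
    ((∑ q ∈ Finset.Icc 2 n, gammaL ν q * ∏ j ∈ Finset.Icc q n, muBar ν j / (lam + muLow ν (j - 1))) +
      gammaL ν (n + 1))

section Aux
variable {N J : ℕ}

lemma mem_layer_iff {n : ℕ} {m : Fin N → Bool} : m ∈ layer N n ↔ wt m = n := by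
  simp [layer]

lemma wt_update_true {l : Fin N → Bool} {i : Fin N} (h : l i = false) :
    wt (Function.update l i true) = wt l + 1 := by
  have : (Finset.univ.filter fun x => Function.update l i true x = true) =
      insert i (Finset.univ.filter fun x => l x = true) := by
    ext x
    by_cases hx : x = i <;> simp [Function.update, hx, h]
  rw [wt, this, Finset.card_insert_of_notMem (by simp [h]), wt]

lemma wt_update_false {l : Fin N → Bool} {i : Fin N} (h : l i = true) :
    wt (Function.update l i false) + 1 = wt l := by
  have : (Finset.univ.filter fun x => l x = true) =
      insert i (Finset.univ.filter fun x => Function.update l i false x = true) := by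
    ext x
    by_cases hx : x = i <;> simp [Function.update, hx, h]
  rw [wt, wt, this, Finset.card_insert_of_notMem (by simp [Function.update])]

lemma totalDown_nonneg {ν : Fin N → ℝ} (hν : ∀ i, 0 < ν i) (m : Fin N → Bool) :
    0 ≤ totalDown ν m := by
  apply Finset.sum_nonneg
  intro i _
  split <;> [exact (hν i).le; rfl]

lemma totalDown_pos {ν : Fin N → ℝ} (hν : ∀ i, 0 < ν i) {m : Fin N → Bool}
    (h : 1 ≤ wt m) : 0 < totalDown ν m := by
  obtain ⟨i, hi⟩ : ∃ i, m i = true := by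
    by_contra hc
    push_neg at hc
    have : wt m = 0 := by
      rw [wt, Finset.card_eq_zero]
      ext x; simp [hc x]
    omega
  apply Finset.sum_pos' (fun j _ => by split <;> [exact (hν j).le; rfl])
  exact ⟨i, Finset.mem_univ i, by simp [hi, hν i]⟩

lemma exists_false_of_wt_lt {l : Fin N → Bool} (h : wt l < N) : ∃ i, l i = false := by
  by_contra hc
  push_neg at hc
  have : wt l = N := by
    rw [wt]
    have : (Finset.univ.filter fun x => l x = true) = Finset.univ := by
      ext x; simpa using (Bool.not_eq_false _).mp (hc x)
    rw [this]; simp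
  omega

lemma dispatched_unique {ζ : Fin J → (Fin N ≃ Fin N)} {l : Fin N → Bool} {j : Fin J}
    {i i' : Fin N} (h : dispatched ζ l j i) (h' : dispatched ζ l j i') : i = i' := by
  rcases h with ⟨h1, h2⟩
  rcases h' with ⟨h1', h2'⟩
  rcases lt_trichotomy (((ζ j).symm i : ℕ)) (((ζ j).symm i' : ℕ)) with hlt | heq | hgt
  · have := h2' ((ζ j).symm i) (by simpa using hlt)
    simp [h1] at this
  · have : (ζ j).symm i = (ζ j).symm i' := Fin.ext heq
    exact (ζ j).symm.injective this
  · have := h2 ((ζ j).symm i') (by simpa using hgt)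
    simp [h1'] at this

lemma exists_dispatched (ζ : Fin J → (Fin N ≃ Fin N)) {l : Fin N → Bool}
    (hl : ∃ i, l i = false) (j : Fin J) : ∃ i, dispatched ζ l j i := by
  classical
  set T : Finset (Fin N) := Finset.univ.filter (fun h => l ((ζ j) h) = false) with hT
  have hTne : T.Nonempty := by
    obtain ⟨i, hi⟩ := hl
    exact ⟨(ζ j).symm i, by simp [hT, hi]⟩
  set h0 := T.min' hTne with hh0
  refine ⟨(ζ j) h0, ?_, ?_⟩
  · have : h0 ∈ T := T.min'_mem hTne
    simpa [hT] using this
  · intro h hlt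
    rw [Equiv.symm_apply_apply] at hlt
    by_contra hc
    have hmem : h ∈ T := by
      simp only [hT, Finset.mem_filter, Finset.mem_univ, true_and]
      exact (Bool.not_eq_true _).mp hc
    have := T.min'_le h hmem
    omega

end Aux
section Aux2
variable {N J : ℕ}

lemma sum_dispatched_f (ζ : Fin J → (Fin N ≃ Fin N)) {l : Fin N → Bool}
    (hl : ∃ i, l i = false) (f : Fin J → ℝ) (j : Fin J) :
    (∑ i : Fin N, if dispatched ζ l j i then f j else 0) = f j := by
  obtain ⟨i0, hi0⟩ := exists_dispatched ζ hl j
  rw [Finset.sum_eq_single i0]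
  · simp [hi0]
  · intro i _ hne
    have : ¬ dispatched ζ l j i := fun h => hne (dispatched_unique h hi0)
    simp [this]
  · simp

lemma totalUp_eq {lam : ℝ} {f : Fin J → ℝ} (hfsum : ∑ j, f j = 1)
    (ζ : Fin J → (Fin N ≃ Fin N)) {l : Fin N → Bool} (hl : wt l < N) :
    totalUp lam f ζ l = lam := by
  classical
  have hfree := exists_false_of_wt_lt hl
  rw [totalUp]
  have : ∀ m : Fin N → Bool, upRate lam f ζ l m =
      ∑ i : Fin N, if l i = false ∧ m = Function.update l i true then
        lam * ∑ j : Fin J, if dispatched ζ l j i then f j else 0 else 0 := fun m => rfl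
  simp only [this]
  rw [Finset.sum_comm]
  have hcol : ∀ i : Fin N,
      (∑ m : Fin N → Bool, if l i = false ∧ m = Function.update l i true then
        lam * ∑ j : Fin J, if dispatched ζ l j i then f j else 0 else 0) =
      lam * ∑ j : Fin J, if dispatched ζ l j i then f j else 0 := by
    intro i
    by_cases hli : l i = false
    · simp [hli]
    · have hz : ∀ j, ¬ dispatched ζ l j i := fun j h => hli h.1
      simp [hli, hz]
  simp only [hcol]
  rw [← Finset.mul_sum, Finset.sum_comm]
  have : ∀ j : Fin J, (∑ i : Fin N, if dispatched ζ l j i then f j else 0) = f j :=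
    sum_dispatched_f ζ hfree f
  simp only [this, hfsum, mul_one]

lemma upRate_nonneg {lam : ℝ} (hlam : 0 ≤ lam) {f : Fin J → ℝ} (hf : ∀ j, 0 ≤ f j)
    (ζ : Fin J → (Fin N ≃ Fin N)) (l m : Fin N → Bool) : 0 ≤ upRate lam f ζ l m := by
  apply Finset.sum_nonneg
  intro i _
  split
  · exact mul_nonneg hlam (Finset.sum_nonneg fun j _ => by split <;> [exact hf j; rfl])
  · rfl

lemma downRate_nonneg {ν : Fin N → ℝ} (hν : ∀ i, 0 < ν i) (l m : Fin N → Bool) :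
    0 ≤ downRate ν l m := by
  apply Finset.sum_nonneg
  intro i _
  split <;> [exact (hν i).le; rfl]

lemma upRate_eq_zero {lam : ℝ} {f : Fin J → ℝ} {ζ : Fin J → (Fin N ≃ Fin N)}
    {l m : Fin N → Bool} (h : wt m ≠ wt l + 1) : upRate lam f ζ l m = 0 := by
  apply Finset.sum_eq_zero
  intro i _
  rw [if_neg]
  rintro ⟨h1, h2⟩
  exact h (by rw [h2, wt_update_true h1])

lemma downRate_eq_zero {ν : Fin N → ℝ} {l m : Fin N → Bool} (h : wt m + 1 ≠ wt l) :
    downRate ν l m = 0 := by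
  apply Finset.sum_eq_zero
  intro i _
  rw [if_neg]
  rintro ⟨h1, h2⟩
  exact h (by rw [h2, wt_update_false h1])

lemma sum_upRate_layer {lam : ℝ} {f : Fin J → ℝ} (hfsum : ∑ j, f j = 1)
    (ζ : Fin J → (Fin N ≃ Fin N)) {l : Fin N → Bool} {q : ℕ} (hq : wt l + 1 = q)
    (hl : wt l < N) :
    ∑ m ∈ layer N q, upRate lam f ζ l m = lam := by
  have h1 : ∑ m ∈ layer N q, upRate lam f ζ l m = totalUp lam f ζ l := by
    rw [totalUp]
    apply Finset.sum_subset (Finset.subset_univ _)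
    intro m _ hm
    exact upRate_eq_zero (by rw [mem_layer_iff] at hm; omega)
  rw [h1, totalUp_eq hfsum ζ hl]

lemma sum_downRate_layer {ν : Fin N → ℝ} {l : Fin N → Bool} {q : ℕ} (hq : q + 1 = wt l) :
    ∑ m ∈ layer N q, downRate ν l m = totalDown ν l := by
  classical
  have huniv : ∑ m : Fin N → Bool, downRate ν l m = totalDown ν l := by
    rw [totalDown]
    have : ∀ m : Fin N → Bool, downRate ν l m =
        ∑ i : Fin N, if l i = true ∧ m = Function.update l i false then ν i else 0 :=
      fun m => rfl
    simp only [this]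
    rw [Finset.sum_comm]
    congr 1
    ext i
    by_cases hli : l i = true <;> simp [hli]
  rw [← huniv]
  apply Finset.sum_subset (Finset.subset_univ _)
  intro m _ hm
  exact downRate_eq_zero (by rw [mem_layer_iff] at hm; omega)

end Aux2
section Aux3
variable {N J : ℕ}

lemma card_layer (N n : ℕ) : (layer N n).card = N.choose n := by
  classical
  have hN : N.choose n = ((Finset.univ : Finset (Fin N)).card).choose n := by simp
  rw [hN, ← Finset.card_powersetCard n (Finset.univ : Finset (Fin N))]
  apply Finset.card_bij (fun B _ => Finset.univ.filter fun x => B x = true)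
  · intro B hB
    rw [Finset.mem_powersetCard]
    exact ⟨Finset.subset_univ _, mem_layer_iff.mp hB⟩
  · intro B hB B' hB' h
    funext x
    by_cases hx : B x = true
    · have : x ∈ Finset.univ.filter fun y => B' y = true := by
        rw [← h]; simp [hx]
      simp only [Finset.mem_filter] at this
      rw [hx, this.2]
    · have : x ∉ Finset.univ.filter fun y => B' y = true := by
        rw [← h]; simp [hx]
      simp only [Finset.mem_filter, Finset.mem_univ, true_and] at this
      rw [Bool.not_eq_true] at hx this
      rw [hx, this]
  · intro s hs
    rw [Finset.mem_powersetCard] at hs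
    refine ⟨fun x => decide (x ∈ s), ?_, ?_⟩
    · rw [mem_layer_iff, wt, ← hs.2]
      congr 1
      ext x; simp
    · ext x; simp

lemma layer_nonempty {n : ℕ} (h : n ≤ N) : (layer N n).Nonempty := by
  rw [← Finset.card_pos, card_layer]
  exact Nat.choose_pos h

lemma layer_zero : layer N 0 = {fun _ => false} := by
  ext m
  rw [mem_layer_iff, Finset.mem_singleton]
  constructor
  · intro h
    funext i
    have : i ∉ Finset.univ.filter fun x => m x = true := by
      rw [wt, Finset.card_eq_zero] at h; simp [h]
    simpa using this
  · rintro rfl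
    rw [wt, Finset.card_eq_zero]
    ext x; simp

lemma layer_N : layer N N = {fullState N} := by
  ext m
  rw [mem_layer_iff, Finset.mem_singleton]
  constructor
  · intro h
    funext i
    have : (Finset.univ.filter fun x => m x = true) = Finset.univ :=
      Finset.eq_univ_of_card _ (by rw [← wt, h]; simp)
    have hi : i ∈ Finset.univ.filter fun x => m x = true := by
      rw [this]; exact Finset.mem_univ i
    simpa [fullState] using (Finset.mem_filter.mp hi).2
  · rintro rfl
    rw [wt]
    have : (Finset.univ.filter fun x => fullState N x = true) = Finset.univ := by
      ext x; simp [fullState]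
    rw [this]; simp

lemma totalDown_le_muBar {ν : Fin N → ℝ} {n : ℕ} {m : Fin N → Bool} (h : m ∈ layer N n) :
    totalDown ν m ≤ muBar ν n := by
  apply le_csSup
  · exact (((layer N n : Set (Fin N → Bool)).toFinite.image _)).bddAbove
  · exact Set.mem_image_of_mem _ (by simpa using h)

lemma muLow_le_totalDown {ν : Fin N → ℝ} {n : ℕ} {m : Fin N → Bool} (h : m ∈ layer N n) :
    muLow ν n ≤ totalDown ν m := by
  apply csInf_le
  · exact (((layer N n : Set (Fin N → Bool)).toFinite.image _)).bddBelow
  · exact Set.mem_image_of_mem _ (by simpa using h)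

lemma muLow_pos {ν : Fin N → ℝ} (hν : ∀ i, 0 < ν i) {n : ℕ} (h1 : 1 ≤ n) (h2 : n ≤ N) :
    0 < muLow ν n := by
  have hne : (totalDown ν '' (layer N n : Set (Fin N → Bool))).Nonempty := by
    obtain ⟨m, hm⟩ := layer_nonempty (N := N) h2
    exact ⟨totalDown ν m, Set.mem_image_of_mem _ (by simpa using hm)⟩
  obtain ⟨m, hm, heq⟩ := hne.csInf_mem ((Set.toFinite _).image (totalDown ν))
  rw [muLow, ← heq]
  exact totalDown_pos hν (by rw [Finset.mem_coe, mem_layer_iff] at hm; omega)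

lemma adjLayer_sum_eq {ν : Fin N → ℝ} {n : ℕ} (m : Fin N → Bool)
    (g : (Fin N → Bool) → ℝ) (hg : ∀ l, downRate ν l m = 0 → g l = 0) :
    ∑ l ∈ adjLayer (n + 1) m, g l = ∑ l ∈ layer N (n + 1), g l := by
  apply Finset.sum_subset (Finset.filter_subset _ _)
  intro l hl hnot
  apply hg
  by_contra hc
  apply hnot
  refine Finset.mem_filter.mpr ⟨hl, ?_⟩
  obtain ⟨i, hi⟩ : ∃ i, l i = true ∧ m = Function.update l i false := by
    by_contra hc2
    push_neg at hc2
    apply hc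
    apply Finset.sum_eq_zero
    intro i _
    rw [if_neg]
    intro hcond
    exact (hc2 i hcond.1) hcond.2
  have : (Finset.univ.filter fun x => l x ≠ m x) = {i} := by
    ext x
    simp only [Finset.mem_filter, Finset.mem_univ, true_and, Finset.mem_singleton]
    constructor
    · intro hx
      by_contra hxi
      apply hx
      rw [hi.2, Function.update_of_ne hxi]
    · rintro rfl
      rw [hi.2, Function.update_self, hi.1]
      simp
  rw [this]; simp

end Aux3
section Aux4

lemma ratio_bound {α : Type*} (s : Finset α) (μ x y : α → ℝ) (μl μb : ℝ)
    (hμl0 : 0 < μl) (hμl : ∀ a ∈ s, μl ≤ μ a) (hμb : ∀ a ∈ s, μ a ≤ μb)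
    (hx : ∀ a ∈ s, 0 ≤ x a) (hy : ∀ a ∈ s, 0 ≤ y a)
    (hxs : ∑ a ∈ s, x a = 1) (hys : ∑ a ∈ s, y a = 1) :
    ∑ a ∈ s, μ a * |x a / (∑ b ∈ s, x b * μ b) - y a / (∑ b ∈ s, y b * μ b)| ≤
      (μb / μl) * ∑ a ∈ s, |x a - y a| := by
  set c := ∑ b ∈ s, x b * μ b with hc
  set c' := ∑ b ∈ s, y b * μ b with hc'
  have hμ0 : ∀ a ∈ s, 0 ≤ μ a := fun a ha => le_trans hμl0.le (hμl a ha)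
  have hcl : μl ≤ c := by
    calc μl = ∑ a ∈ s, x a * μl := by rw [← Finset.sum_mul, hxs, one_mul]
    _ ≤ c := Finset.sum_le_sum fun a ha => mul_le_mul_of_nonneg_left (hμl a ha) (hx a ha)
  have hcl' : μl ≤ c' := by
    calc μl = ∑ a ∈ s, y a * μl := by rw [← Finset.sum_mul, hys, one_mul]
    _ ≤ c' := Finset.sum_le_sum fun a ha => mul_le_mul_of_nonneg_left (hμl a ha) (hy a ha)
  have hc0 : 0 < c := lt_of_lt_of_le hμl0 hcl
  have hc0' : 0 < c' := lt_of_lt_of_le hμl0 hcl'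
  set A := ∑ a ∈ s, μ a * max (x a - y a) 0 with hA
  set B := ∑ a ∈ s, μ a * max (y a - x a) 0 with hB
  set T := ∑ a ∈ s, |x a - y a| with hT
  have hT0 : 0 ≤ T := Finset.sum_nonneg fun a _ => abs_nonneg _
  have hABsum : A + B = ∑ a ∈ s, μ a * |x a - y a| := by
    rw [hA, hB, ← Finset.sum_add_distrib]
    apply Finset.sum_congr rfl
    intro a _
    rw [← mul_add]
    congr 1
    rw [show y a - x a = -(x a - y a) by ring]
    exact max_zero_add_max_neg_zero_eq_abs_self _
  have hABdiff : A - B = c - c' := by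
    rw [hA, hB, hc, hc', ← Finset.sum_sub_distrib, ← Finset.sum_sub_distrib]
    apply Finset.sum_congr rfl
    intro a _
    rw [← mul_sub, show y a - x a = -(x a - y a) by ring,
      max_zero_sub_max_neg_zero_eq_self]
    ring
  have hhalf : (∑ a ∈ s, max (x a - y a) 0) = T / 2 ∧
      (∑ a ∈ s, max (y a - x a) 0) = T / 2 := by
    have h0 : ∑ a ∈ s, (x a - y a) = 0 := by
      rw [Finset.sum_sub_distrib, hxs, hys, sub_self]
    have hd : (∑ a ∈ s, max (x a - y a) 0) - (∑ a ∈ s, max (y a - x a) 0) = 0 := by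
      have he : (∑ a ∈ s, max (x a - y a) 0) - (∑ a ∈ s, max (y a - x a) 0) =
          ∑ a ∈ s, (x a - y a) := by
        rw [← Finset.sum_sub_distrib]
        apply Finset.sum_congr rfl
        intro a _
        rw [show y a - x a = -(x a - y a) by ring]
        exact max_zero_sub_max_neg_zero_eq_self _
      rw [he, h0]
    have hs2 : (∑ a ∈ s, max (x a - y a) 0) + (∑ a ∈ s, max (y a - x a) 0) = T := by
      rw [← Finset.sum_add_distrib, hT]
      apply Finset.sum_congr rfl
      intro a _
      rw [show y a - x a = -(x a - y a) by ring]
      exact max_zero_add_max_neg_zero_eq_abs_self _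
    constructor <;> linarith
  have hAle : A ≤ μb * (T / 2) := by
    rw [hA, ← hhalf.1, Finset.mul_sum]
    exact Finset.sum_le_sum fun a ha =>
      mul_le_mul_of_nonneg_right (hμb a ha) (le_max_right _ 0)
  have hBle : B ≤ μb * (T / 2) := by
    rw [hB, ← hhalf.2, Finset.mul_sum]
    exact Finset.sum_le_sum fun a ha =>
      mul_le_mul_of_nonneg_right (hμb a ha) (le_max_right _ 0)
  have step1 : ∑ a ∈ s, μ a * |x a / c - y a / c'| ≤
      (∑ a ∈ s, μ a * |x a - y a|) / c + |c - c'| / (c * c') * (∑ a ∈ s, y a * μ a) := by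
    rw [Finset.sum_div, Finset.mul_sum, ← Finset.sum_add_distrib]
    apply Finset.sum_le_sum
    intro a ha
    have hsplit : x a / c - y a / c' = (x a - y a) / c + y a * (c' - c) / (c * c') := by
      field_simp
      ring
    have h1 : |x a / c - y a / c'| ≤ |x a - y a| / c + y a * |c - c'| / (c * c') := by
      rw [hsplit]
      refine (abs_add_le _ _).trans (le_of_eq ?_)
      rw [abs_div, abs_of_pos hc0, abs_div, abs_mul, abs_of_nonneg (hy a ha),
        abs_of_pos (mul_pos hc0 hc0'), abs_sub_comm c' c]
    calc μ a * |x a / c - y a / c'| ≤ μ a * (|x a - y a| / c + y a * |c - c'| / (c * c')) :=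
          mul_le_mul_of_nonneg_left h1 (hμ0 a ha)
    _ = μ a * |x a - y a| / c + |c - c'| / (c * c') * (y a * μ a) := by ring
  have hyc : ∑ a ∈ s, y a * μ a = c' := rfl
  have step2 : (∑ a ∈ s, μ a * |x a - y a|) / c + |c - c'| / (c * c') * c' =
      (A + B + |A - B|) / c := by
    rw [← hABsum, hABdiff]
    field_simp
  have step3 : A + B + |A - B| ≤ μb * T := by
    rcases le_total A B with h | h
    · rw [abs_of_nonpos (by linarith)]; linarith
    · rw [abs_of_nonneg (by linarith)]; linarith
  have hμb0 : 0 ≤ μb := by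
    obtain ⟨a, ha⟩ : s.Nonempty := by
      rcases Finset.eq_empty_or_nonempty s with h | h
      · rw [h] at hxs; simp at hxs
      · exact h
    linarith [hμl a ha, hμb a ha]
  calc ∑ a ∈ s, μ a * |x a / c - y a / c'| ≤
      (∑ a ∈ s, μ a * |x a - y a|) / c + |c - c'| / (c * c') * (∑ a ∈ s, y a * μ a) := step1
  _ = (A + B + |A - B|) / c := by rw [hyc, step2]
  _ ≤ μb * T / c := (div_le_div_iff_of_pos_right hc0).mpr step3
  _ ≤ μb * T / μl := div_le_div_of_nonneg_left (mul_nonneg hμb0 hT0) hμl0 hcl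
  _ = (μb / μl) * T := by ring

end Aux4
section Main

variable {N J : ℕ} {lam : ℝ} {f : Fin J → ℝ} {ν : Fin N → ℝ}
    {ζ : Fin J → (Fin N ≃ Fin N)}
    {pI : ℕ → ℕ → (Fin N → Bool) → ℝ} {pR : ℕ → ℕ → ℕ → (Fin N → Bool) → ℝ}

lemma lamI_eq (hfsum : ∑ j, f j = 1) (k q : ℕ) (hq : q < N)
    (hS : ∑ l ∈ layer N q, pI k q l = 1) : lamI lam f ζ pI k q = lam := by
  have h : ∀ l ∈ layer N q, pI k q l * totalUp lam f ζ l = pI k q l * lam := fun l hl => by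
    rw [totalUp_eq hfsum ζ (by rw [mem_layer_iff] at hl; omega)]
  rw [lamI, Finset.sum_congr rfl h, ← Finset.sum_mul, hS, one_mul]

lemma muI_le (k q : ℕ) (hpos : ∀ m ∈ layer N q, 0 ≤ pI k q m)
    (hS : ∑ m ∈ layer N q, pI k q m = 1) : muI ν pI k q ≤ muBar ν q := by
  rw [muI]
  calc ∑ m ∈ layer N q, pI k q m * totalDown ν m ≤
      ∑ m ∈ layer N q, pI k q m * muBar ν q :=
        Finset.sum_le_sum fun m hm =>
          mul_le_mul_of_nonneg_left (totalDown_le_muBar hm) (hpos m hm)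
  _ = muBar ν q := by rw [← Finset.sum_mul, hS, one_mul]

lemma le_muI (k q : ℕ) (hpos : ∀ m ∈ layer N q, 0 ≤ pI k q m)
    (hS : ∑ m ∈ layer N q, pI k q m = 1) : muLow ν q ≤ muI ν pI k q := by
  rw [muI]
  calc muLow ν q = ∑ m ∈ layer N q, pI k q m * muLow ν q := by
        rw [← Finset.sum_mul, hS, one_mul]
  _ ≤ ∑ m ∈ layer N q, pI k q m * totalDown ν m :=
        Finset.sum_le_sum fun m hm =>
          mul_le_mul_of_nonneg_left (muLow_le_totalDown hm) (hpos m hm)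

lemma limit_eq (hN : 2 ≤ N) (hfsum : ∑ j, f j = 1)
    (hiter : IsCPUIterates lam f ζ ν pI pR)
    (k n : ℕ) (hk : 2 ≤ k) (hn1 : 1 ≤ n) (hn2 : n ≤ N - 1)
    {m : Fin N → Bool} (hm : m ∈ layer N n) :
    pI k n m =
      (∑ l ∈ layer N (n - 1), pI k (n - 1) l *
          (muI ν pI k n / lamI lam f ζ pI k (n - 1)) *
          (upRate lam f ζ l m / (lam + totalDown ν m))) +
      (∑ l ∈ layer N (n + 1), pI (k - 1) (n + 1) l *
          (lamI lam f ζ pI (k - 1) n / muI ν pI (k - 1) (n + 1)) *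
          (downRate ν l m / (lam + totalDown ν m))) := by
  obtain ⟨-, -, -, -, -, -, -, -, h9, h10⟩ := hiter
  have htu : totalUp lam f ζ m = lam :=
    totalUp_eq hfsum ζ (by rw [mem_layer_iff] at hm; omega)
  have hlim := h10 k hk n hn1 hn2 m hm
  have hmu : Filter.Tendsto (fun r => muR ν pR k n r) Filter.atTop
      (nhds (muI ν pI k n)) := by
    simp only [muR, muI]
    exact tendsto_finset_sum _ fun m' hm' =>
      (h10 k hk n hn1 hn2 m' hm').mul_const _
  have hmu' : Filter.Tendsto (fun r => muR ν pR k n (r - 1)) Filter.atTop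
      (nhds (muI ν pI k n)) := hmu.comp (tendsto_sub_atTop_nat 1)
  set G : ℝ → ℝ := fun t =>
    (∑ l ∈ layer N (n - 1), pI k (n - 1) l *
        (t / lamI lam f ζ pI k (n - 1)) *
        (upRate lam f ζ l m / (lam + totalDown ν m))) +
    (∑ l ∈ layer N (n + 1), pI (k - 1) (n + 1) l *
        (lamI lam f ζ pI (k - 1) n / muI ν pI (k - 1) (n + 1)) *
        (downRate ν l m / (lam + totalDown ν m))) with hG
  have hGr : ∀ r, 1 ≤ r → pR k n r m = G (muR ν pR k n (r - 1)) := by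
    intro r hr
    rw [h9 k hk n hn1 hn2 r hr m hm, htu, hG]
    congr 1
    apply adjLayer_sum_eq m
    intro l hl
    rw [hl]
    simp
  have hGt : Filter.Tendsto (fun r => G (muR ν pR k n (r - 1))) Filter.atTop
      (nhds (G (muI ν pI k n))) := by
    rw [hG]
    apply Filter.Tendsto.add
    · apply tendsto_finset_sum
      intro l _
      exact ((hmu'.div_const _).const_mul _).mul_const _
    · exact tendsto_const_nhds
  have hfinal : Filter.Tendsto (fun r => pR k n r m) Filter.atTop
      (nhds (G (muI ν pI k n))) := by
    apply hGt.congr'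
    filter_upwards [Filter.eventually_ge_atTop 1] with r hr using (hGr r hr).symm
  exact tendsto_nhds_unique hlim hfinal

lemma balance (hN : 2 ≤ N) (hlam : 0 < lam) (hfsum : ∑ j, f j = 1) (hν : ∀ i, 0 < ν i)
    (hiter : IsCPUIterates lam f ζ ν pI pR)
    (k n : ℕ) (hk : 2 ≤ k) (hn1 : 1 ≤ n) (hn2 : n ≤ N - 1)
    (hL1 : lamI lam f ζ pI k (n - 1) = lam)
    (hL2 : lamI lam f ζ pI (k - 1) n = lam)
    (hC' : muI ν pI (k - 1) (n + 1) ≠ 0)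
    {m : Fin N → Bool} (hm : m ∈ layer N n) :
    (lam + totalDown ν m) * pI k n m =
      (muI ν pI k n / lam) *
        (∑ l ∈ layer N (n - 1), pI k (n - 1) l * upRate lam f ζ l m) +
      (lam / muI ν pI (k - 1) (n + 1)) *
        (∑ l ∈ layer N (n + 1), pI (k - 1) (n + 1) l * downRate ν l m) := by
  have hd : (0:ℝ) < lam + totalDown ν m :=
    add_pos_of_pos_of_nonneg hlam (totalDown_nonneg hν m)
  rw [limit_eq hN hfsum hiter k n hk hn1 hn2 hm, hL1, hL2, mul_add, Finset.mul_sum,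
    Finset.mul_sum, Finset.mul_sum, Finset.mul_sum]
  congr 1
  · apply Finset.sum_congr rfl
    intro l _
    field_simp
  · apply Finset.sum_congr rfl
    intro l _
    field_simp

end Main
section Main2

variable {N J : ℕ} {lam : ℝ} {f : Fin J → ℝ} {ν : Fin N → ℝ}
    {ζ : Fin J → (Fin N ≃ Fin N)}
    {pI : ℕ → ℕ → (Fin N → Bool) → ℝ} {pR : ℕ → ℕ → ℕ → (Fin N → Bool) → ℝ}

lemma pI_facts (hN : 2 ≤ N) (hlam : 0 < lam) (hf : ∀ j, 0 ≤ f j) (hfsum : ∑ j, f j = 1)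
    (hν : ∀ i, 0 < ν i) (hiter : IsCPUIterates lam f ζ ν pI pR) :
    ∀ k, 1 ≤ k → ∀ n, n ≤ N →
      (∀ m ∈ layer N n, 0 ≤ pI k n m) ∧ (∑ m ∈ layer N n, pI k n m) = 1 := by
  have hIT := hiter
  obtain ⟨h1, h2, h3, h4, h5, h6, h7, h8, h9, h10⟩ := hIT
  intro k
  induction k using Nat.strong_induction_on with
  | _ k ih =>
  intro hk1
  rcases Nat.lt_or_ge k 2 with hk2 | hk2
  · -- k = 1
    have hk : k = 1 := by omega
    subst hk
    intro n hnN
    have hcne : ((N.choose n : ℕ) : ℝ) ≠ 0 := Nat.cast_ne_zero.mpr (Nat.choose_pos hnN).ne'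
    constructor
    · intro m hm
      rw [h2 n hnN m hm]
      positivity
    · rw [Finset.sum_congr rfl (h2 n hnN), Finset.sum_const, card_layer, nsmul_eq_mul]
      field_simp
  · intro n
    induction n using Nat.strong_induction_on with
    | _ n ihn =>
    intro hnN
    rcases Nat.eq_zero_or_pos n with hn0 | hn1
    · subst hn0
      have hmem : (fun _ => false) ∈ layer N 0 := by
        rw [layer_zero]; exact Finset.mem_singleton_self _
      constructor
      · intro m hm; rw [h4 k (by omega) m hm]; norm_num
      · rw [layer_zero, Finset.sum_singleton, h4 k (by omega) _ hmem]
    · rcases Nat.eq_or_lt_of_le hnN with hnN' | hnN'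
      · rw [hnN']
        have hmem : fullState N ∈ layer N N := by
          rw [layer_N]; exact Finset.mem_singleton_self _
        constructor
        · intro m hm; rw [h5 k (by omega) m hm]; norm_num
        · rw [layer_N, Finset.sum_singleton, h5 k (by omega) _ hmem]
      · have hn2 : n ≤ N - 1 := by omega
        have hprev := ihn (n - 1) (by omega) (by omega)
        have hprevk := ih (k - 1) (by omega) (by omega)
        have hL1 : lamI lam f ζ pI k (n - 1) = lam :=
          lamI_eq hfsum k (n - 1) (by omega) hprev.2
        have hL2 : lamI lam f ζ pI (k - 1) n = lam :=
          lamI_eq hfsum (k - 1) n (by omega) (hprevk n (by omega)).2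
        have hk1n1 := hprevk (n + 1) (by omega)
        have hC'pos : 0 < muI ν pI (k - 1) (n + 1) :=
          lt_of_lt_of_le (muLow_pos hν (by omega) (by omega))
            (le_muI (k - 1) (n + 1) hk1n1.1 hk1n1.2)
        have hpRnn : ∀ r, ∀ m ∈ layer N n, 0 ≤ pR k n r m := by
          intro r
          induction r with
          | zero =>
            intro m hm
            rw [h8 k hk2 n hn1 hn2 m hm]
            exact (hprevk n hnN).1 m hm
          | succ r ihr =>
            intro m hm
            rw [h9 k hk2 n hn1 hn2 (r + 1) (by omega) m hm]
            have hmuRnn : 0 ≤ muR ν pR k n (r + 1 - 1) := by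
              simp only [Nat.add_sub_cancel]
              exact Finset.sum_nonneg fun m' hm' =>
                mul_nonneg (ihr m' hm') (totalDown_nonneg hν m')
            have hden : 0 ≤ totalUp lam f ζ m + totalDown ν m := by
              rw [totalUp_eq hfsum ζ (by rw [mem_layer_iff] at hm; omega)]
              exact add_nonneg hlam.le (totalDown_nonneg hν m)
            apply add_nonneg
            · apply Finset.sum_nonneg
              intro l hl
              refine mul_nonneg (mul_nonneg (hprev.1 l hl) (div_nonneg hmuRnn ?_))
                (div_nonneg (upRate_nonneg hlam.le hf ζ l m) hden)
              rw [hL1]; exact hlam.le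
            · apply Finset.sum_nonneg
              intro l hl
              have hl' : l ∈ layer N (n + 1) := Finset.filter_subset _ _ hl
              refine mul_nonneg (mul_nonneg (hk1n1.1 l hl') (div_nonneg ?_ hC'pos.le))
                (div_nonneg (downRate_nonneg hν l m) hden)
              rw [hL2]; exact hlam.le
        have hnn : ∀ m ∈ layer N n, 0 ≤ pI k n m := fun m hm =>
          ge_of_tendsto' (h10 k hk2 n hn1 hn2 m hm) (fun r => hpRnn r m hm)
        refine ⟨hnn, ?_⟩
        have hbal : ∀ m ∈ layer N n, (lam + totalDown ν m) * pI k n m =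
            (muI ν pI k n / lam) *
              (∑ l ∈ layer N (n - 1), pI k (n - 1) l * upRate lam f ζ l m) +
            (lam / muI ν pI (k - 1) (n + 1)) *
              (∑ l ∈ layer N (n + 1), pI (k - 1) (n + 1) l * downRate ν l m) :=
          fun m hm => balance hN hlam hfsum hν hiter k n hk2 hn1 hn2 hL1 hL2 hC'pos.ne' hm
        have hsum := Finset.sum_congr rfl hbal
        have hLHS : ∑ m ∈ layer N n, (lam + totalDown ν m) * pI k n m =
            lam * (∑ m ∈ layer N n, pI k n m) + muI ν pI k n := by
          rw [muI, Finset.mul_sum, ← Finset.sum_add_distrib]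
          apply Finset.sum_congr rfl
          intro m _
          ring
        have hU : ∑ m ∈ layer N n,
            (∑ l ∈ layer N (n - 1), pI k (n - 1) l * upRate lam f ζ l m) = lam := by
          rw [Finset.sum_comm]
          have hrow : ∀ l ∈ layer N (n - 1),
              (∑ m ∈ layer N n, pI k (n - 1) l * upRate lam f ζ l m) =
                pI k (n - 1) l * lam := by
            intro l hl
            rw [mem_layer_iff] at hl
            rw [← Finset.mul_sum, sum_upRate_layer hfsum ζ (by omega) (by omega)]
          rw [Finset.sum_congr rfl hrow, ← Finset.sum_mul, hprev.2, one_mul]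
        have hV : ∑ m ∈ layer N n,
            (∑ l ∈ layer N (n + 1), pI (k - 1) (n + 1) l * downRate ν l m) =
              muI ν pI (k - 1) (n + 1) := by
          rw [Finset.sum_comm, muI]
          apply Finset.sum_congr rfl
          intro l hl
          rw [mem_layer_iff] at hl
          rw [← Finset.mul_sum, sum_downRate_layer (by omega)]
        have hRHS : ∑ m ∈ layer N n,
            ((muI ν pI k n / lam) *
              (∑ l ∈ layer N (n - 1), pI k (n - 1) l * upRate lam f ζ l m) +
            (lam / muI ν pI (k - 1) (n + 1)) *
              (∑ l ∈ layer N (n + 1), pI (k - 1) (n + 1) l * downRate ν l m)) =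
            muI ν pI k n + lam := by
          rw [Finset.sum_add_distrib, ← Finset.mul_sum, ← Finset.mul_sum, hU, hV]
          field_simp
        have hfin : lam * (∑ m ∈ layer N n, pI k n m) + muI ν pI k n =
            muI ν pI k n + lam := by
          rw [← hLHS, hsum, hRHS]
        have hS : lam * (∑ m ∈ layer N n, pI k n m) = lam * 1 := by linarith
        exact mul_left_cancel₀ hlam.ne' hS

end Main2

/-- Layer-wise ℓ¹-difference recursion for the CPU iterates
(established in the proof of Theorem 1). -/
theorem cpu_layerwise_l1_recursion
    {N J : ℕ} (hN : 2 ≤ N) (hJ : 1 ≤ J)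
    (lam : ℝ) (hlam : 0 < lam)
    (f : Fin J → ℝ) (hf : ∀ j, 0 ≤ f j) (hfsum : ∑ j, f j = 1)
    (ν : Fin N → ℝ) (hν : ∀ i, 0 < ν i)
    (ζ : Fin J → (Fin N ≃ Fin N))
    (pI : ℕ → ℕ → (Fin N → Bool) → ℝ) (pR : ℕ → ℕ → ℕ → (Fin N → Bool) → ℝ)
    (hiter : IsCPUIterates lam f ζ ν pI pR) :
    ∀ k, 2 ≤ k → ∀ n, 1 ≤ n → n ≤ N - 1 →
      (∑ m ∈ layer N n, |pI (k + 1) n m - pI k n m|) ≤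
        (muBar ν n * (∑ m ∈ layer N (n - 1), |pI (k + 1) (n - 1) m - pI k (n - 1) m|) +
            gammaL ν (n + 1) * lam *
              (∑ m ∈ layer N (n + 1), |pI k (n + 1) m - pI (k - 1) (n + 1) m|)) /
          (lam + muLow ν n) := by
  intro k hk n hn1 hn2
  have hfacts := pI_facts hN hlam hf hfsum hν hiter
  have hfk1 := hfacts (k + 1) (by omega)
  have hfk := hfacts k (by omega)
  have hfkm := hfacts (k - 1) (by omega)
  -- layer-sum facts
  have hSp : (∑ m ∈ layer N n, pI (k + 1) n m) = 1 := (hfk1 n (by omega)).2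
  have hSc : (∑ m ∈ layer N n, pI k n m) = 1 := (hfk n (by omega)).2
  have hSm1p : (∑ m ∈ layer N (n - 1), pI (k + 1) (n - 1) m) = 1 := (hfk1 (n - 1) (by omega)).2
  have hSm1 : (∑ m ∈ layer N (n - 1), pI k (n - 1) m) = 1 := (hfk (n - 1) (by omega)).2
  have hx := hfk (n + 1) (by omega)
  have hy := hfkm (n + 1) (by omega)
  have hμlow1 : 0 < muLow ν (n + 1) := muLow_pos hν (by omega) (by omega)
  have hc2pos : 0 < muI ν pI k (n + 1) :=
    lt_of_lt_of_le hμlow1 (le_muI k (n + 1) hx.1 hx.2)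
  have hc2'pos : 0 < muI ν pI (k - 1) (n + 1) :=
    lt_of_lt_of_le hμlow1 (le_muI (k - 1) (n + 1) hy.1 hy.2)
  -- balance equations
  have hL1p : lamI lam f ζ pI (k + 1) (n - 1) = lam :=
    lamI_eq hfsum (k + 1) (n - 1) (by omega) hSm1p
  have hL1 : lamI lam f ζ pI k (n - 1) = lam := lamI_eq hfsum k (n - 1) (by omega) hSm1
  have hL2p : lamI lam f ζ pI (k + 1 - 1) n = lam := by
    simp only [Nat.add_sub_cancel]
    exact lamI_eq hfsum k n (by omega) hSc
  have hL2 : lamI lam f ζ pI (k - 1) n = lam :=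
    lamI_eq hfsum (k - 1) n (by omega) (hfkm n (by omega)).2
  have hC2p : muI ν pI (k + 1 - 1) (n + 1) ≠ 0 := by
    simp only [Nat.add_sub_cancel]
    exact hc2pos.ne'
  have B1 : ∀ m ∈ layer N n, (lam + totalDown ν m) * pI (k + 1) n m =
      (muI ν pI (k + 1) n / lam) *
        (∑ l ∈ layer N (n - 1), pI (k + 1) (n - 1) l * upRate lam f ζ l m) +
      (lam / muI ν pI k (n + 1)) *
        (∑ l ∈ layer N (n + 1), pI k (n + 1) l * downRate ν l m) := by
    intro m hm
    have := balance hN hlam hfsum hν hiter (k + 1) n (by omega) hn1 hn2 hL1p hL2p hC2p hm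
    simpa only [Nat.add_sub_cancel] using this
  have B2 : ∀ m ∈ layer N n, (lam + totalDown ν m) * pI k n m =
      (muI ν pI k n / lam) *
        (∑ l ∈ layer N (n - 1), pI k (n - 1) l * upRate lam f ζ l m) +
      (lam / muI ν pI (k - 1) (n + 1)) *
        (∑ l ∈ layer N (n + 1), pI (k - 1) (n + 1) l * downRate ν l m) :=
    fun m hm => balance hN hlam hfsum hν hiter k n hk hn1 hn2 hL1 hL2 hc2'pos.ne' hm
  -- abbreviations
  set cp := muI ν pI (k + 1) n with hcp
  set cc := muI ν pI k n with hcc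
  set c2 := muI ν pI k (n + 1) with hc2
  set c2' := muI ν pI (k - 1) (n + 1) with hc2'
  set U : (Fin N → Bool) → ℝ :=
    fun m => ∑ l ∈ layer N (n - 1), pI k (n - 1) l * upRate lam f ζ l m with hUdef
  set Up : (Fin N → Bool) → ℝ :=
    fun m => ∑ l ∈ layer N (n - 1), pI (k + 1) (n - 1) l * upRate lam f ζ l m with hUpdef
  set Vp : (Fin N → Bool) → ℝ :=
    fun m => ∑ l ∈ layer N (n + 1), pI k (n + 1) l * downRate ν l m with hVpdef
  set V : (Fin N → Bool) → ℝ :=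
    fun m => ∑ l ∈ layer N (n + 1), pI (k - 1) (n + 1) l * downRate ν l m with hVdef
  set D : (Fin N → Bool) → ℝ := fun m => pI (k + 1) n m - pI k n m with hDdef
  set M := ∑ m ∈ layer N n, |D m| with hM
  set Mlo := ∑ m ∈ layer N (n - 1), |pI (k + 1) (n - 1) m - pI k (n - 1) m| with hMlo
  set Mhi := ∑ m ∈ layer N (n + 1), |pI k (n + 1) m - pI (k - 1) (n + 1) m| with hMhi
  set dc := cp - cc with hdc
  -- key per-state identity
  have hE : ∀ m ∈ layer N n,
      (lam + totalDown ν m) * D m - dc * (U m / lam) =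
        (cp / lam) * (Up m - U m) + lam * (Vp m / c2 - V m / c2') := by
    intro m hm
    have b1 := B1 m hm
    have b2 := B2 m hm
    calc (lam + totalDown ν m) * D m - dc * (U m / lam)
        = ((lam + totalDown ν m) * pI (k + 1) n m) -
            ((lam + totalDown ν m) * pI k n m) - (cp - cc) * (U m / lam) := by
          rw [hDdef]; ring
    _ = ((cp / lam) * Up m + (lam / c2) * Vp m) -
          ((cc / lam) * U m + (lam / c2') * V m) - (cp - cc) * (U m / lam) := by
          rw [b1, b2]
    _ = (cp / lam) * (Up m - U m) + lam * (Vp m / c2 - V m / c2') := by ring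
  -- nonnegativity facts
  have hUnn : ∀ m ∈ layer N n, 0 ≤ U m := by
    intro m _
    exact Finset.sum_nonneg fun l hl =>
      mul_nonneg ((hfk (n - 1) (by omega)).1 l hl) (upRate_nonneg hlam.le hf ζ l m)
  have hUsum : ∑ m ∈ layer N n, U m = lam := by
    rw [hUdef, Finset.sum_comm]
    have hrow : ∀ l ∈ layer N (n - 1),
        (∑ m ∈ layer N n, pI k (n - 1) l * upRate lam f ζ l m) = pI k (n - 1) l * lam := by
      intro l hl
      rw [mem_layer_iff] at hl
      rw [← Finset.mul_sum, sum_upRate_layer hfsum ζ (by omega) (by omega)]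
    rw [Finset.sum_congr rfl hrow, ← Finset.sum_mul, hSm1, one_mul]
  have hcpnn : 0 ≤ cp :=
    Finset.sum_nonneg fun m hm =>
      mul_nonneg ((hfk1 n (by omega)).1 m hm) (totalDown_nonneg hν m)
  have hcple : cp ≤ muBar ν n := muI_le (k + 1) n (hfk1 n (by omega)).1 hSp
  have hMlonn : 0 ≤ Mlo := Finset.sum_nonneg fun m _ => abs_nonneg _
  have hMhinn : 0 ≤ Mhi := Finset.sum_nonneg fun m _ => abs_nonneg _
  -- bound on ∑ |Up - U|
  have hdU : ∑ m ∈ layer N n, |Up m - U m| ≤ lam * Mlo := by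
    have hper : ∀ m ∈ layer N n, |Up m - U m| ≤
        ∑ l ∈ layer N (n - 1),
          |pI (k + 1) (n - 1) l - pI k (n - 1) l| * upRate lam f ζ l m := by
      intro m _
      have : Up m - U m = ∑ l ∈ layer N (n - 1),
          (pI (k + 1) (n - 1) l - pI k (n - 1) l) * upRate lam f ζ l m := by
        rw [hUpdef, hUdef, ← Finset.sum_sub_distrib]
        exact Finset.sum_congr rfl fun l _ => by ring
      rw [this]
      refine (Finset.abs_sum_le_sum_abs _ _).trans (le_of_eq ?_)
      exact Finset.sum_congr rfl fun l _ => by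
        rw [abs_mul, abs_of_nonneg (upRate_nonneg hlam.le hf ζ l m)]
    calc ∑ m ∈ layer N n, |Up m - U m| ≤
        ∑ m ∈ layer N n, ∑ l ∈ layer N (n - 1),
          |pI (k + 1) (n - 1) l - pI k (n - 1) l| * upRate lam f ζ l m :=
          Finset.sum_le_sum hper
    _ = ∑ l ∈ layer N (n - 1),
          |pI (k + 1) (n - 1) l - pI k (n - 1) l| * lam := by
        rw [Finset.sum_comm]
        apply Finset.sum_congr rfl
        intro l hl
        rw [mem_layer_iff] at hl
        rw [← Finset.mul_sum, sum_upRate_layer hfsum ζ (by omega) (by omega)]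
    _ = lam * Mlo := by rw [hMlo, ← Finset.sum_mul]; ring
  -- bound on the normalized down-flow differences
  have hW : ∑ m ∈ layer N n, |Vp m / c2 - V m / c2'| ≤ gammaL ν (n + 1) * Mhi := by
    have hper : ∀ m ∈ layer N n, |Vp m / c2 - V m / c2'| ≤
        ∑ l ∈ layer N (n + 1),
          |pI k (n + 1) l / c2 - pI (k - 1) (n + 1) l / c2'| * downRate ν l m := by
      intro m _
      have : Vp m / c2 - V m / c2' = ∑ l ∈ layer N (n + 1),
          (pI k (n + 1) l / c2 - pI (k - 1) (n + 1) l / c2') * downRate ν l m := by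
        rw [hVpdef, hVdef, Finset.sum_div, Finset.sum_div, ← Finset.sum_sub_distrib]
        exact Finset.sum_congr rfl fun l _ => by ring
      rw [this]
      refine (Finset.abs_sum_le_sum_abs _ _).trans (le_of_eq ?_)
      exact Finset.sum_congr rfl fun l _ => by
        rw [abs_mul, abs_of_nonneg (downRate_nonneg hν l m)]
    calc ∑ m ∈ layer N n, |Vp m / c2 - V m / c2'| ≤
        ∑ m ∈ layer N n, ∑ l ∈ layer N (n + 1),
          |pI k (n + 1) l / c2 - pI (k - 1) (n + 1) l / c2'| * downRate ν l m :=
          Finset.sum_le_sum hper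
    _ = ∑ l ∈ layer N (n + 1),
          |pI k (n + 1) l / c2 - pI (k - 1) (n + 1) l / c2'| * totalDown ν l := by
        rw [Finset.sum_comm]
        apply Finset.sum_congr rfl
        intro l hl
        rw [mem_layer_iff] at hl
        rw [← Finset.mul_sum, sum_downRate_layer (by omega)]
    _ = ∑ l ∈ layer N (n + 1),
          totalDown ν l * |pI k (n + 1) l / c2 - pI (k - 1) (n + 1) l / c2'| := by
        exact Finset.sum_congr rfl fun l _ => by ring
    _ ≤ (muBar ν (n + 1) / muLow ν (n + 1)) * Mhi := by
        rw [hc2, hc2', hMhi]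
        exact ratio_bound (layer N (n + 1)) (totalDown ν) (pI k (n + 1)) (pI (k - 1) (n + 1))
          (muLow ν (n + 1)) (muBar ν (n + 1)) hμlow1
          (fun a ha => muLow_le_totalDown ha) (fun a ha => totalDown_le_muBar ha)
          hx.1 hy.1 hx.2 hy.2
    _ = gammaL ν (n + 1) * Mhi := by rw [gammaL]
  -- dc facts
  have hDsum : ∑ m ∈ layer N n, D m = 0 := by
    rw [hDdef, Finset.sum_sub_distrib, hSp, hSc, sub_self]
  have hdc_bd : |dc| ≤ ∑ m ∈ layer N n, (totalDown ν m - muLow ν n) * |D m| := by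
    have hdceq : dc = ∑ m ∈ layer N n, (totalDown ν m - muLow ν n) * D m := by
      have h1 : dc = ∑ m ∈ layer N n, totalDown ν m * D m := by
        rw [hdc, hcp, hcc, muI, muI, ← Finset.sum_sub_distrib]
        exact Finset.sum_congr rfl fun m _ => by rw [hDdef]; ring
      have h2 : ∑ m ∈ layer N n, (totalDown ν m - muLow ν n) * D m =
          (∑ m ∈ layer N n, totalDown ν m * D m) - muLow ν n * ∑ m ∈ layer N n, D m := by
        rw [Finset.mul_sum, ← Finset.sum_sub_distrib]
        exact Finset.sum_congr rfl fun m _ => by ring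
      rw [h1, h2, hDsum, mul_zero, sub_zero]
    rw [hdceq]
    refine (Finset.abs_sum_le_sum_abs _ _).trans (le_of_eq ?_)
    exact Finset.sum_congr rfl fun m hm => by
      rw [abs_mul, abs_of_nonneg (by linarith [muLow_le_totalDown (ν := ν) hm] : (0:ℝ) ≤ totalDown ν m - muLow ν n)]
  -- step A
  have hstepA : (lam + muLow ν n) * M ≤
      (∑ m ∈ layer N n, (lam + totalDown ν m) * |D m|) - |dc| := by
    have e1 : ∑ m ∈ layer N n, (lam + totalDown ν m) * |D m| =
        lam * M + ∑ m ∈ layer N n, totalDown ν m * |D m| := by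
      rw [hM, Finset.mul_sum, ← Finset.sum_add_distrib]
      exact Finset.sum_congr rfl fun m _ => by ring
    have e2 : (∑ m ∈ layer N n, totalDown ν m * |D m|) -
        (∑ m ∈ layer N n, (totalDown ν m - muLow ν n) * |D m|) = muLow ν n * M := by
      rw [hM, Finset.mul_sum, ← Finset.sum_sub_distrib]
      exact Finset.sum_congr rfl fun m _ => by ring
    have := hdc_bd
    linarith
  -- step B
  have hstepB : (∑ m ∈ layer N n, (lam + totalDown ν m) * |D m|) - |dc| ≤
      ∑ m ∈ layer N n, |(lam + totalDown ν m) * D m - dc * (U m / lam)| := by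
    have e1 : ∑ m ∈ layer N n, ((lam + totalDown ν m) * |D m| - |dc| * (U m / lam)) =
        (∑ m ∈ layer N n, (lam + totalDown ν m) * |D m|) - |dc| := by
      rw [Finset.sum_sub_distrib]
      congr 1
      rw [← Finset.mul_sum]
      have : ∑ m ∈ layer N n, U m / lam = 1 := by
        rw [← Finset.sum_div, hUsum, div_self hlam.ne']
      rw [this, mul_one]
    rw [← e1]
    apply Finset.sum_le_sum
    intro m hm
    have habs1 : |(lam + totalDown ν m) * D m| = (lam + totalDown ν m) * |D m| := by
      rw [abs_mul, abs_of_nonneg (by linarith [totalDown_nonneg hν m] : (0:ℝ) ≤ lam + totalDown ν m)]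
    have habs2 : |dc * (U m / lam)| = |dc| * (U m / lam) := by
      rw [abs_mul, abs_of_nonneg (div_nonneg (hUnn m hm) hlam.le)]
    calc (lam + totalDown ν m) * |D m| - |dc| * (U m / lam)
        = |(lam + totalDown ν m) * D m| - |dc * (U m / lam)| := by rw [habs1, habs2]
    _ ≤ |(lam + totalDown ν m) * D m - dc * (U m / lam)| := abs_sub_abs_le_abs_sub _ _
  -- step C
  have hstepC : ∑ m ∈ layer N n, |(lam + totalDown ν m) * D m - dc * (U m / lam)| ≤
      muBar ν n * Mlo + lam * (gammaL ν (n + 1) * Mhi) := by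
    have hper : ∀ m ∈ layer N n, |(lam + totalDown ν m) * D m - dc * (U m / lam)| ≤
        (cp / lam) * |Up m - U m| + lam * |Vp m / c2 - V m / c2'| := by
      intro m hm
      rw [hE m hm]
      refine (abs_add_le _ _).trans ?_
      rw [abs_mul, abs_mul, abs_of_nonneg (div_nonneg hcpnn hlam.le), abs_of_pos hlam]
    calc ∑ m ∈ layer N n, |(lam + totalDown ν m) * D m - dc * (U m / lam)| ≤
        ∑ m ∈ layer N n, ((cp / lam) * |Up m - U m| + lam * |Vp m / c2 - V m / c2'|) :=
          Finset.sum_le_sum hper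
    _ = (cp / lam) * (∑ m ∈ layer N n, |Up m - U m|) +
          lam * (∑ m ∈ layer N n, |Vp m / c2 - V m / c2'|) := by
        rw [Finset.sum_add_distrib, Finset.mul_sum, Finset.mul_sum]
    _ ≤ (cp / lam) * (lam * Mlo) + lam * (gammaL ν (n + 1) * Mhi) := by
        have h1 : (cp / lam) * (∑ m ∈ layer N n, |Up m - U m|) ≤ (cp / lam) * (lam * Mlo) :=
          mul_le_mul_of_nonneg_left hdU (div_nonneg hcpnn hlam.le)
        have h2 : lam * (∑ m ∈ layer N n, |Vp m / c2 - V m / c2'|) ≤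
            lam * (gammaL ν (n + 1) * Mhi) := mul_le_mul_of_nonneg_left hW hlam.le
        linarith
    _ ≤ muBar ν n * Mlo + lam * (gammaL ν (n + 1) * Mhi) := by
        have : (cp / lam) * (lam * Mlo) = cp * Mlo := by field_simp
        rw [this]
        have := mul_le_mul_of_nonneg_right hcple hMlonn
        linarith
  have hdenpos : (0:ℝ) < lam + muLow ν n := by
    have := muLow_pos hν hn1 (by omega)
    linarith
  rw [le_div_iff₀ hdenpos]
  calc M * (lam + muLow ν n) = (lam + muLow ν n) * M := mul_comm _ _
  _ ≤ muBar ν n * Mlo + lam * (gammaL ν (n + 1) * Mhi) :=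
      le_trans hstepA (le_trans hstepB hstepC)
  _ = muBar ν n * Mlo + gammaL ν (n + 1) * lam * Mhi := by ring
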